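/- Let β > 1 be real and n ≥ 1. A word ω = (ω_1,…,ω_n) ∈ Σ_β^n is full if and only if for every m ∈ ℕ and every ω' = (ω'_1,…,ω'_m) ∈ Σ_β^m, the concatenation ω ∗ ω' = (ω_1,…,ω_n,ω'_1,…,ω'_m) is β-admissible. Moreover, if (ω_1,…,ω_{n−1},ω'_n) is β-admissible with ω'_n > 0, then for every integer ω_n with 0 ≤ ω_n < ω'_n, the word (ω_1,…,ω_{n−1},ω_n) is full. -/

import Mathlib

open Set Filter MeasureTheory
open scoped ENNReal

/-- The β-transformation `x ↦ βx mod 1`. -/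
noncomputable def Tbeta (β : ℝ) (x : ℝ) : ℝ := β * x - ⌊β * x⌋

/-- The asymptotic recurrence exponent
`r_β(x) = sup {r ∈ [0,∞] : |T_β^n x - x| < β^{-rn} for infinitely many n}`. -/
noncomputable def rBeta (β : ℝ) (x : ℝ) : ℝ≥0∞ :=
  ⨆ r ∈ {r : ℝ | 0 ≤ r ∧
      ∃ᶠ n : ℕ in atTop, |(Tbeta β)^[n] x - x| < β ^ (-(r * (n : ℝ)))},
    ENNReal.ofReal r

/-- The uniform recurrence exponent
`r̂_β(x) = sup {r̂ ∈ [0,∞] : ∀ N ≫ 1, ∃ 1 ≤ n ≤ N, |T_β^n x - x| < β^{-r̂N}}`. -/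
noncomputable def rHatBeta (β : ℝ) (x : ℝ) : ℝ≥0∞ :=
  ⨆ r ∈ {r : ℝ | 0 ≤ r ∧
      ∀ᶠ N : ℕ in atTop, ∃ n : ℕ, 1 ≤ n ∧ n ≤ N ∧
        |(Tbeta β)^[n] x - x| < β ^ (-(r * (N : ℝ)))},
    ENNReal.ofReal r

/-- The `n`-th digit `ε_n(x,β) = ⌊β T_β^{n-1} x⌋` of the β-expansion (for `n ≥ 1`). -/
noncomputable def epsDigit (β : ℝ) (x : ℝ) (n : ℕ) : ℤ := ⌊β * (Tbeta β)^[n - 1] x⌋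

/-- A word `ω` of length `n` over the digits is β-admissible if it occurs as the first `n`
digits of the β-expansion of some `x ∈ [0,1)`. -/
def IsAdmissible (β : ℝ) {n : ℕ} (ω : Fin n → ℤ) : Prop :=
  ∃ x ∈ Set.Ico (0 : ℝ) 1, ∀ j : Fin n, epsDigit β x ((j : ℕ) + 1) = ω j

/-- `Σ_β^n`, the set of β-admissible words of length `n`. -/
def SigmaSet (β : ℝ) (n : ℕ) : Set (Fin n → ℤ) := {ω | IsAdmissible β ω}

/-- The cylinder `I_n(ω)` of points of `[0,1)` whose first `n` digits form the word `ω`. -/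
def cylinder (β : ℝ) {n : ℕ} (ω : Fin n → ℤ) : Set ℝ :=
  {x ∈ Set.Ico (0 : ℝ) 1 | ∀ j : Fin n, epsDigit β x ((j : ℕ) + 1) = ω j}

/-- A word `ω` of length `n` is full if its cylinder has length `β^{-n}`. -/
def IsFull (β : ℝ) {n : ℕ} (ω : Fin n → ℤ) : Prop :=
  volume (cylinder β ω) = ENNReal.ofReal ((β ^ n)⁻¹)

/-! The map `T_β^n` is affine with slope `β^n` on each cylinder `I_n(ω)`, so `|I_n(ω)|` is
`β^{-n}` times the length of its image `T_β^n I_n(ω) ⊆ [0,1)`. This image is an initial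
segment of `[0,1)`: inverting one step of `T_β` on the branch of a digit `a ≥ 0` shows that
anything below a point of the image is in the image. Hence `ω` is full iff
`T_β^n I_n(ω) = [0,1)`, which is exactly the condition that every admissible word may follow
`ω`. For the second part, `(a + t)/β < b/β ≤ T_β^{n-1} x` for every `t ∈ [0,1)` and every
`x ∈ I_n(ω_1 … ω_{n-1} b)`. -/

lemma Real.volume_eq_one_iff_Ico_subset {s : Set ℝ} (hs : s ⊆ Ico 0 1)
    (hdown : ∀ ⦃a b : ℝ⦄, 0 ≤ a → a ≤ b → b ∈ s → a ∈ s) :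
    volume s = 1 ↔ Ico 0 1 ⊆ s := by
  refine ⟨fun hvol t ht => ?_, fun hsub => by rw [hs.antisymm hsub, Real.volume_Ico]; simp⟩
  by_contra hts
  have hsub : s ⊆ Ico 0 t := fun b hb =>
    ⟨(hs hb).1, lt_of_not_ge fun htb => hts (hdown ht.1 htb hb)⟩
  have : volume s < 1 := calc
    volume s ≤ volume (Ico 0 t) := measure_mono hsub
    _ = ENNReal.ofReal t := by rw [Real.volume_Ico, sub_zero]
    _ < 1 := ENNReal.ofReal_lt_one.mpr ht.2
  exact this.ne hvol

section BetaExpansion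

variable {β : ℝ}

lemma Tbeta_mem_Ico (x : ℝ) : Tbeta β x ∈ Ico (0 : ℝ) 1 :=
  ⟨Int.fract_nonneg (β * x), Int.fract_lt_one (β * x)⟩

lemma iterate_Tbeta_mem_Ico {x : ℝ} (hx : x ∈ Ico (0 : ℝ) 1) :
    ∀ n : ℕ, (Tbeta β)^[n] x ∈ Ico (0 : ℝ) 1
  | 0 => hx
  | n + 1 => by rw [Function.iterate_succ_apply']; exact Tbeta_mem_Ico _

lemma floor_mul_Tbeta_iterate_nonneg (hβ : 0 < β) {x : ℝ} (hx : x ∈ Ico (0 : ℝ) 1)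
    (n : ℕ) :
    0 ≤ ⌊β * (Tbeta β)^[n] x⌋ :=
  Int.floor_nonneg.mpr (mul_nonneg hβ.le (iterate_Tbeta_mem_Ico hx n).1)

/-- The inverse branch `y ↦ (a + y)/β` of `T_β` for the digit `a`. -/
lemma floor_and_Tbeta_of_intCast_add_div (hβ : β ≠ 0) (a : ℤ) {y : ℝ}
    (hy : y ∈ Ico (0 : ℝ) 1) :
    ⌊β * ((a + y) / β)⌋ = a ∧ Tbeta β ((a + y) / β) = y := by
  have hmul : β * ((a + y) / β) = a + y := by field_simp
  have hfloor : ⌊(a : ℝ) + y⌋ = a := by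
    rw [Int.floor_intCast_add, Int.floor_eq_zero_iff.mpr hy, add_zero]
  refine ⟨by rw [hmul, hfloor], ?_⟩
  rw [Tbeta, hmul, hfloor]
  ring

lemma epsDigit_add (x : ℝ) (n j : ℕ) :
    epsDigit β x (n + j + 1) = epsDigit β ((Tbeta β)^[n] x) (j + 1) := by
  simp only [epsDigit, Nat.add_sub_cancel, ← Function.iterate_add_apply, Nat.add_comm j n]

lemma isAdmissible_iff_nonempty {n : ℕ} (ω : Fin n → ℤ) :
    IsAdmissible β ω ↔ (cylinder β ω).Nonempty :=
  Iff.rfl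

lemma cylinder_zero (ω : Fin 0 → ℤ) : cylinder β ω = Ico 0 1 := by
  ext x
  simp [_root_.cylinder]

lemma mem_cylinder_snoc {k : ℕ} (w : Fin k → ℤ) (a : ℤ) {x : ℝ} :
    x ∈ cylinder β (Fin.snoc w a : Fin (k + 1) → ℤ) ↔
      x ∈ cylinder β w ∧ ⌊β * (Tbeta β)^[k] x⌋ = a := by
  simp only [_root_.cylinder, mem_ofPred_eq, Fin.forall_fin_succ', Fin.snoc_castSucc,
    Fin.snoc_last, Fin.val_castSucc, Fin.val_last, epsDigit, Nat.add_sub_cancel, and_assoc]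

lemma mem_cylinder_append {n m : ℕ} (ω : Fin n → ℤ) (ω' : Fin m → ℤ) {x : ℝ} :
    x ∈ cylinder β (Fin.append ω ω') ↔
      x ∈ cylinder β ω ∧ (Tbeta β)^[n] x ∈ cylinder β ω' := by
  simp only [_root_.cylinder, mem_ofPred_eq, Fin.forall_fin_add, Fin.append_left,
    Fin.append_right, Fin.val_castAdd, Fin.val_natAdd, epsDigit_add]
  exact ⟨fun ⟨hx, hω, hω'⟩ => ⟨⟨hx, hω⟩, iterate_Tbeta_mem_Ico hx n, hω'⟩,
    fun ⟨⟨hx, hω⟩, _, hω'⟩ => ⟨hx, hω, hω'⟩⟩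

lemma pow_mul_sub_eq_of_mem_cylinder :
    ∀ {n : ℕ} {ω : Fin n → ℤ} {x x' : ℝ}, x ∈ cylinder β ω → x' ∈ cylinder β ω →
      β ^ n * (x - x') = (Tbeta β)^[n] x - (Tbeta β)^[n] x'
  | 0, _, _, _, _, _ => by simp
  | k + 1, ω, x, x', hx, hx' => by
    rw [← Fin.snoc_init_self ω, mem_cylinder_snoc] at hx hx'
    have ih := pow_mul_sub_eq_of_mem_cylinder hx.1 hx'.1
    have hfloor : (⌊β * (Tbeta β)^[k] x⌋ : ℝ) = ⌊β * (Tbeta β)^[k] x'⌋ := by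
      rw [hx.2, hx'.2]
    rw [Function.iterate_succ_apply', Function.iterate_succ_apply', Tbeta, Tbeta, pow_succ,
      mul_comm _ β, mul_assoc, ih, hfloor]
    ring

lemma pow_mul_sub_lt_one_of_mem_cylinder {n : ℕ} {ω : Fin n → ℤ} {x x' : ℝ}
    (hx : x ∈ cylinder β ω) (hx' : x' ∈ cylinder β ω) : β ^ n * (x - x') < 1 := by
  rw [pow_mul_sub_eq_of_mem_cylinder hx hx']
  linarith [(iterate_Tbeta_mem_Ico (β := β) hx.1 n).2,
    (iterate_Tbeta_mem_Ico (β := β) hx'.1 n).1]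

def cylinderImage (β : ℝ) {n : ℕ} (ω : Fin n → ℤ) : Set ℝ :=
  (Tbeta β)^[n] '' cylinder β ω

lemma cylinderImage_subset_Ico {n : ℕ} (ω : Fin n → ℤ) :
    cylinderImage β ω ⊆ Ico 0 1 := by
  rintro _ ⟨x, hx, rfl⟩
  exact iterate_Tbeta_mem_Ico hx.1 n

lemma mem_cylinderImage_snoc (hβ : β ≠ 0) {k : ℕ} {w : Fin k → ℤ} {a : ℤ} {t : ℝ}
    (ht : t ∈ Ico (0 : ℝ) 1) (hat : (a + t) / β ∈ cylinderImage β w) :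
    t ∈ cylinderImage β (Fin.snoc w a : Fin (k + 1) → ℤ) := by
  obtain ⟨x, hx, hxt⟩ := hat
  obtain ⟨hfloor, hT⟩ := floor_and_Tbeta_of_intCast_add_div hβ a ht
  refine ⟨x, (mem_cylinder_snoc w a).mpr ⟨hx, by rw [hxt, hfloor]⟩, ?_⟩
  rw [Function.iterate_succ_apply', hxt, hT]

lemma mem_cylinderImage_of_le (hβ : 0 < β) :
    ∀ {n : ℕ} {ω : Fin n → ℤ} {s t : ℝ}, 0 ≤ t → t ≤ s → s ∈ cylinderImage β ω →
      t ∈ cylinderImage β ω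
  | 0, ω, s, t, ht, hts, hs => by
    rw [cylinderImage, Function.iterate_zero, image_id, cylinder_zero] at hs ⊢
    exact ⟨ht, hts.trans_lt hs.2⟩
  | k + 1, ω, s, t, ht, hts, hs => by
    rw [← Fin.snoc_init_self ω] at hs ⊢
    obtain ⟨x, hx, rfl⟩ := hs
    rw [mem_cylinder_snoc] at hx
    set a := ω (Fin.last k)
    have hxk : (Tbeta β)^[k] x ∈ cylinderImage β (Fin.init ω) := ⟨x, hx.1, rfl⟩
    have hbranch : (Tbeta β)^[k] x = (a + (Tbeta β)^[k + 1] x) / β := by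
      rw [Function.iterate_succ_apply', Tbeta, hx.2]
      field_simp
      ring
    have ha : (0 : ℝ) ≤ a := by
      rw [← hx.2]; exact_mod_cast floor_mul_Tbeta_iterate_nonneg hβ hx.1.1 k
    have ht1 : t < 1 := hts.trans_lt (iterate_Tbeta_mem_Ico hx.1.1 _).2
    refine mem_cylinderImage_snoc hβ.ne' ⟨ht, ht1⟩ ?_
    refine mem_cylinderImage_of_le hβ (by positivity) ?_ hxk
    rw [hbranch]
    gcongr

lemma volume_cylinder (hβ : 0 < β) {n : ℕ} (ω : Fin n → ℤ) :
    volume (cylinder β ω) = ENNReal.ofReal (β ^ n)⁻¹ * volume (cylinderImage β ω) := by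
  rcases (cylinder β ω).eq_empty_or_nonempty with hempty | ⟨x₀, hx₀⟩
  · simp [cylinderImage, hempty]
  have hβn : β ^ n ≠ 0 := pow_ne_zero n hβ.ne'
  have hpre : cylinder β ω =
      (fun x => β ^ n * x) ⁻¹' ((fun y => y + ((Tbeta β)^[n] x₀ - β ^ n * x₀)) ⁻¹'
        cylinderImage β ω) := by
    ext x
    simp only [mem_preimage]
    constructor
    · intro hx
      refine ⟨x, hx, ?_⟩
      linarith [pow_mul_sub_eq_of_mem_cylinder hx hx₀]
    · rintro ⟨x', hx', hx'x⟩
      have hdiff := pow_mul_sub_eq_of_mem_cylinder hx' hx₀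
      have hx'eq : x' = x := mul_left_cancel₀ hβn (by linarith)
      exact hx'eq ▸ hx'
  rw [hpre, Real.volume_preimage_mul_left hβn, measure_preimage_add_right,
    abs_of_pos (by positivity)]

lemma isFull_iff_Ico_subset_cylinderImage (hβ : 0 < β) {n : ℕ} (ω : Fin n → ℤ) :
    IsFull β ω ↔ Ico 0 1 ⊆ cylinderImage β ω := by
  have hpos : ENNReal.ofReal (β ^ n)⁻¹ ≠ 0 := (ENNReal.ofReal_pos.mpr (by positivity)).ne'
  rw [IsFull, volume_cylinder hβ, ENNReal.mul_eq_left hpos ENNReal.ofReal_ne_top]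
  exact Real.volume_eq_one_iff_Ico_subset (cylinderImage_subset_Ico ω)
    fun _ _ ha hab hb => mem_cylinderImage_of_le hβ ha hab hb

lemma isFull_iff_forall_isAdmissible_append (hβ : 1 < β) {n : ℕ} (ω : Fin n → ℤ) :
    IsFull β ω ↔
      ∀ (m : ℕ) (ω' : Fin m → ℤ), IsAdmissible β ω' → IsAdmissible β (Fin.append ω ω') := by
  simp only [isFull_iff_Ico_subset_cylinderImage (zero_lt_one.trans hβ),
    isAdmissible_iff_nonempty]
  constructor
  · rintro hsub m ω' ⟨y, hy⟩
    obtain ⟨x, hx, rfl⟩ := hsub hy.1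
    exact ⟨x, (mem_cylinder_append ω ω').mpr ⟨hx, hy⟩⟩
  · intro happend t ht
    obtain ⟨t', htt', ht'1⟩ := exists_between ht.2
    obtain ⟨m, hm⟩ := exists_pow_lt_of_lt_one (sub_pos.mpr htt') (inv_lt_one_of_one_lt₀ hβ)
    have ht' : t' ∈ cylinder β (fun j : Fin m => epsDigit β t' (j + 1)) :=
      ⟨⟨ht.1.trans htt'.le, ht'1⟩, fun _ => rfl⟩
    obtain ⟨x, hx⟩ := happend m _ ⟨t', ht'⟩
    rw [mem_cylinder_append] at hx
    refine mem_cylinderImage_of_le (zero_lt_one.trans hβ) ht.1 ?_ ⟨x, hx.1, rfl⟩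
    have hclose : t' - (Tbeta β)^[n] x < β⁻¹ ^ m := by
      rw [inv_pow, ← one_div, lt_div_iff₀' (by positivity)]
      exact pow_mul_sub_lt_one_of_mem_cylinder ht' hx.2
    linarith

lemma isFull_snoc_of_lt (hβ : 0 < β) {k : ℕ} {w : Fin k → ℤ} {a b : ℤ}
    (hadm : IsAdmissible β (Fin.snoc w b : Fin (k + 1) → ℤ)) (ha : 0 ≤ a) (hab : a < b) :
    IsFull β (Fin.snoc w a : Fin (k + 1) → ℤ) := by
  obtain ⟨x, hx⟩ := (isAdmissible_iff_nonempty _).mp hadm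
  rw [mem_cylinder_snoc] at hx
  have hb : (b : ℝ) ≤ β * (Tbeta β)^[k] x := hx.2 ▸ Int.floor_le _
  have hab' : (a : ℝ) + 1 ≤ b := by exact_mod_cast hab
  have ha' : (0 : ℝ) ≤ a := by exact_mod_cast ha
  rw [isFull_iff_Ico_subset_cylinderImage hβ]
  intro t ht
  refine mem_cylinderImage_snoc hβ.ne' ht
    (mem_cylinderImage_of_le hβ (by have := ht.1; positivity) ?_ ⟨x, hx.1, rfl⟩)
  rw [div_le_iff₀' hβ]
  linarith [ht.2]

end BetaExpansion

theorem full_word_characterization (β : ℝ) (hβ : 1 < β) :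
    (∀ n : ℕ, 1 ≤ n → ∀ ω : Fin n → ℤ, IsAdmissible β ω →
      (IsFull β ω ↔
        ∀ (m : ℕ) (ω' : Fin m → ℤ), IsAdmissible β ω' →
          IsAdmissible β (Fin.append ω ω'))) ∧
    (∀ (k : ℕ) (w : Fin k → ℤ) (b : ℤ), 0 < b →
      IsAdmissible β (Fin.snoc w b : Fin (k + 1) → ℤ) →
      ∀ a : ℤ, 0 ≤ a → a < b → IsFull β (Fin.snoc w a : Fin (k + 1) → ℤ)) :=
  ⟨fun _ _ ω _ => isFull_iff_forall_isAdmissible_append hβ ω,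
    fun _ _ _ _ hadm _ ha hab => isFull_snoc_of_lt (zero_lt_one.trans hβ) hadm ha hab⟩
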